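/- arXiv:2303.03296 — 4 statements merged into one kernel-verified Lean document; each statement's English description precedes it below -/
import Mathlib

section
/- A graph G = (V, E) with |E| edges and b(G) bridges admits a strongly connected partial orientation in which exactly k edges are oriented (leaving the rest undirected) if and only if G is connected and k ≤ |E| − b(G). -/
open scoped Classical

/-- Number of arcs leaving a vertex set `X` in a multiset of arcs. -/
noncomputable def arcsOut {V : Type*} (A : Multiset (V × V)) (X : Finset V) : ℕ :=
  (A.filter fun a => a.1 ∈ X ∧ a.2 ∉ X).card

/-- Number of undirected edges with exactly one endpoint in `X`. -/
noncomputable def edgesCross {V : Type*} (E : Multiset (V × V)) (X : Finset V) : ℕ :=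
  (E.filter fun e => (e.1 ∈ X ∧ e.2 ∉ X) ∨ (e.2 ∈ X ∧ e.1 ∉ X)).card

/-- A mixed graph `(V, E, A)` is `k`-arc-strong (for `k = 1`: strongly connected). -/
def ArcStrong {V : Type*} [Fintype V] (k : ℕ) (E A : Multiset (V × V)) : Prop :=
  ∀ X : Finset V, X.Nonempty → X ≠ Finset.univ → k ≤ arcsOut A X + edgesCross E X

/-- A multigraph (on a nonempty finite vertex set) is connected iff every nonempty
proper vertex subset has an edge crossing it. -/
def MConnected {V : Type*} [Fintype V] (E : Multiset (V × V)) : Prop :=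
  ∀ X : Finset V, X.Nonempty → X ≠ Finset.univ → 1 ≤ edgesCross E X

/-- The number of bridges of the multigraph `E`: edges whose removal disconnects it. -/
noncomputable def bridgeCount {V : Type*} [Fintype V] (E : Multiset (V × V)) : ℕ :=
  (E.filter fun e => ¬ MConnected (E.erase e)).card

/-!
An oriented edge crossing a cut `X` leaves `X` or `Xᶜ`. So in a strongly connected partial
orientation a bridge, the only edge across some cut, must stay undirected, whence `k ≤ |E| - b(G)`.
Conversely, orient edges one at a time (Boesch–Tindell): if an undirected edge `a` of a strongly
connected mixed graph is not a bridge of the underlying graph, one of its two orientations keeps the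
graph strongly connected. Otherwise there are tight cuts `X` and `Y` which `a` enters and leaves
respectively; by submodularity of the out-degree, `X ∩ Y` and `X ∪ Y` are tight as well and not
crossed by `a`, which forces `Y = Xᶜ`, and then `a` is a bridge.
-/

lemma Multiset.card_filter_add_card_filter_le {α : Type*} (S : Multiset α) (p q r s : α → Prop)
    [DecidablePred p] [DecidablePred q] [DecidablePred r] [DecidablePred s]
    (h : ∀ a ∈ S, ((if p a then 1 else 0) + (if q a then 1 else 0) : ℕ) ≤
      (if r a then 1 else 0) + (if s a then 1 else 0)) :
    (S.filter p).card + (S.filter q).card ≤ (S.filter r).card + (S.filter s).card := by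
  simp only [← Multiset.countP_eq_card_filter]
  induction S using Multiset.induction_on with
  | empty => simp
  | cons a S ih =>
    simp only [Multiset.countP_cons]
    have ha := h a (Multiset.mem_cons_self a S)
    have hS := ih fun b hb => h b (Multiset.mem_cons_of_mem hb)
    omega

section CutFunctions

variable {V : Type*}

lemma arcsOut_cons (a : V × V) (A : Multiset (V × V)) (X : Finset V) :
    arcsOut (a ::ₘ A) X = arcsOut A X + if a.1 ∈ X ∧ a.2 ∉ X then 1 else 0 := by
  simp only [arcsOut, ← Multiset.countP_eq_card_filter, Multiset.countP_cons]

lemma edgesCross_cons (a : V × V) (E : Multiset (V × V)) (X : Finset V) :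
    edgesCross (a ::ₘ E) X = edgesCross E X +
      if (a.1 ∈ X ∧ a.2 ∉ X) ∨ (a.2 ∈ X ∧ a.1 ∉ X) then 1 else 0 := by
  simp only [edgesCross, ← Multiset.countP_eq_card_filter, Multiset.countP_cons]

@[simp]
lemma arcsOut_zero (X : Finset V) : arcsOut 0 X = 0 := rfl

@[simp]
lemma arcsOut_add (A B : Multiset (V × V)) (X : Finset V) :
    arcsOut (A + B) X = arcsOut A X + arcsOut B X := by
  simp [arcsOut, Multiset.filter_add]

@[simp]
lemma edgesCross_add (E F : Multiset (V × V)) (X : Finset V) :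
    edgesCross (E + F) X = edgesCross E X + edgesCross F X := by
  simp [edgesCross, Multiset.filter_add]

@[simp]
lemma edgesCross_map_swap (E : Multiset (V × V)) (X : Finset V) :
    edgesCross (E.map Prod.swap) X = edgesCross E X := by
  rw [edgesCross, edgesCross, Multiset.filter_map, Multiset.card_map]
  exact congrArg _ (Multiset.filter_congr fun _ _ => Or.comm)

lemma edgesCross_cons_swap (a : V × V) (E : Multiset (V × V)) (X : Finset V) :
    edgesCross (a.swap ::ₘ E) X = edgesCross (a ::ₘ E) X := by
  simp only [edgesCross_cons, Prod.fst_swap, Prod.snd_swap, or_comm]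

lemma edgesCross_compl [Fintype V] (E : Multiset (V × V)) (X : Finset V) :
    edgesCross E Xᶜ = edgesCross E X := by
  refine congrArg Multiset.card (Multiset.filter_congr fun _ _ => ?_)
  simp only [Finset.mem_compl, not_not]
  tauto

lemma count_le_edgesCross {E : Multiset (V × V)} {a : V × V} {X : Finset V}
    (ha : (a.1 ∈ X ∧ a.2 ∉ X) ∨ (a.2 ∈ X ∧ a.1 ∉ X)) :
    E.count a ≤ edgesCross E X := by
  rw [edgesCross, ← Multiset.count_filter_of_pos (p := fun e : V × V =>
    (e.1 ∈ X ∧ e.2 ∉ X) ∨ (e.2 ∈ X ∧ e.1 ∉ X)) ha]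
  exact Multiset.count_le_card _ _

lemma arcsOut_add_arcsOut_compl [Fintype V] (A : Multiset (V × V)) (X : Finset V) :
    arcsOut A X + arcsOut A Xᶜ = edgesCross A X := by
  have key (a : V × V) : ((if a.1 ∈ X ∧ a.2 ∉ X then 1 else 0) +
      (if a.1 ∈ Xᶜ ∧ a.2 ∉ Xᶜ then 1 else 0) : ℕ) =
      (if (a.1 ∈ X ∧ a.2 ∉ X) ∨ (a.2 ∈ X ∧ a.1 ∉ X) then 1 else 0) + (if False then 1 else 0) := by
    by_cases h1 : a.1 ∈ X <;> by_cases h2 : a.2 ∈ X <;> simp [h1, h2]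
  have h₁ := A.card_filter_add_card_filter_le _ _ _ _ fun a _ => (key a).le
  have h₂ := A.card_filter_add_card_filter_le _ _ _ _ fun a _ => (key a).ge
  simp only [Multiset.filter_false, Multiset.card_zero, add_zero] at h₁ h₂
  exact le_antisymm h₁ h₂

lemma arcsOut_inter_add_arcsOut_union_le (A : Multiset (V × V)) (X Y : Finset V) :
    arcsOut A (X ∩ Y) + arcsOut A (X ∪ Y) ≤ arcsOut A X + arcsOut A Y :=
  A.card_filter_add_card_filter_le _ _ _ _ fun a _ => by
    by_cases h1 : a.1 ∈ X <;> by_cases h2 : a.1 ∈ Y <;> by_cases h3 : a.2 ∈ X <;>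
      by_cases h4 : a.2 ∈ Y <;> simp [h1, h2, h3, h4]

lemma edgesCross_inter_add_edgesCross_union_le (E : Multiset (V × V)) (X Y : Finset V) :
    edgesCross E (X ∩ Y) + edgesCross E (X ∪ Y) ≤ edgesCross E X + edgesCross E Y :=
  E.card_filter_add_card_filter_le _ _ _ _ fun a _ => by
    by_cases h1 : a.1 ∈ X <;> by_cases h2 : a.1 ∈ Y <;> by_cases h3 : a.2 ∈ X <;>
      by_cases h4 : a.2 ∈ Y <;> simp [h1, h2, h3, h4]

end CutFunctions

section Orientation

variable {V : Type*} [Fintype V]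

lemma MConnected.of_edgesCross_eq {E F : Multiset (V × V)} (h : MConnected E)
    (hEF : ∀ X, edgesCross E X = edgesCross F X) : MConnected F :=
  fun X hX hXu => hEF X ▸ h X hX hXu

lemma exists_mem_mConnected_erase {G E : Multiset (V × V)} (hEG : E ≤ G)
    (hlt : bridgeCount G < Multiset.card E) : ∃ e ∈ E, MConnected (G.erase e) := by
  by_contra! hall
  have hbridges : E.filter (fun e => ¬ MConnected (G.erase e)) = E :=
    Multiset.filter_eq_self.2 hall
  have := Multiset.card_le_card (Multiset.filter_le_filter (fun e => ¬ MConnected (G.erase e)) hEG)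
  rw [hbridges] at this
  exact (this.trans_lt hlt).false

namespace ArcStrong

variable {E A : Multiset (V × V)}

lemma mConnected (h : ArcStrong 1 E A) : MConnected (E + A) := fun X hX hXu => by
  have hs := h X hX hXu
  have := arcsOut_add_arcsOut_compl A X
  rw [edgesCross_add]
  omega

lemma two_le_two_mul_edgesCross_add_edgesCross (h : ArcStrong 1 E A) {X : Finset V}
    (hX : X.Nonempty) (hXu : X ≠ Finset.univ) :
    2 ≤ 2 * edgesCross E X + edgesCross A X := by
  have hsX := h X hX hXu
  have hsXc := h Xᶜ (by simpa [Finset.nonempty_iff_ne_empty] using hXu)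
    ((Finset.compl_ne_univ_iff_nonempty X).2 hX)
  rw [edgesCross_compl] at hsXc
  have := arcsOut_add_arcsOut_compl A X
  omega

/-- `D` is the multiset of arcs `A` seen as undirected edges, each written in either direction. -/
lemma filter_not_mConnected_erase_le (h : ArcStrong 1 E A) {D : Multiset (V × V)}
    (hD : ∀ X, edgesCross D X = edgesCross A X) :
    (E + D).filter (fun e => ¬ MConnected ((E + D).erase e)) ≤ E := by
  refine Multiset.le_iff_count.2 fun a => ?_
  rw [Multiset.count_filter]
  split_ifs with hbridge
  · exact Nat.zero_le _
  by_cases ha : a ∈ E + D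
  swap
  · simp [Multiset.count_eq_zero_of_notMem ha]
  obtain ⟨X, hX, hXu, hcut⟩ : ∃ X : Finset V, X.Nonempty ∧ X ≠ Finset.univ ∧
      edgesCross ((E + D).erase a) X = 0 := by
    simpa [MConnected, Nat.lt_one_iff] using hbridge
  have hsplit := edgesCross_cons a ((E + D).erase a) X
  rw [Multiset.cons_erase ha, hcut, edgesCross_add, hD] at hsplit
  have htwo := h.two_le_two_mul_edgesCross_add_edgesCross hX hXu
  have hcross : (a.1 ∈ X ∧ a.2 ∉ X) ∨ (a.2 ∈ X ∧ a.1 ∉ X) := by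
    by_contra hc
    rw [if_neg hc] at hsplit
    omega
  have hDa : D.count a = 0 := by
    have := hD X ▸ count_le_edgesCross (E := D) hcross
    rw [if_pos hcross] at hsplit
    omega
  rw [Multiset.count_add, hDa, add_zero]

lemma exists_tight_of_not_arcStrong_cons {a : V × V} (h : ArcStrong 1 (a ::ₘ E) A)
    (h' : ¬ ArcStrong 1 E (a ::ₘ A)) :
    ∃ X : Finset V, X.Nonempty ∧ X ≠ Finset.univ ∧ arcsOut A X + edgesCross E X = 0 ∧
      a.2 ∈ X ∧ a.1 ∉ X := by
  simp only [ArcStrong, not_forall, not_le] at h'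
  obtain ⟨X, hX, hXu, hlt⟩ := h'
  have hs := h X hX hXu
  rw [arcsOut_cons] at hlt
  rw [edgesCross_cons] at hs
  refine ⟨X, hX, hXu, by split_ifs at hlt <;> omega, ?_⟩
  by_cases h1 : a.1 ∈ X <;> by_cases h2 : a.2 ∈ X <;> simp [h1, h2] at hs hlt ⊢ <;> omega

lemma one_le_of_not_crosses {a : V × V} (h : ArcStrong 1 (a ::ₘ E) A) {X : Finset V}
    (hX : X.Nonempty) (hXu : X ≠ Finset.univ) (ha : a.1 ∈ X ↔ a.2 ∈ X) :
    1 ≤ arcsOut A X + edgesCross E X := by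
  have hs := h X hX hXu
  rwa [edgesCross_cons, if_neg (by tauto), add_zero] at hs

theorem orient {a : V × V} (h : ArcStrong 1 (a ::ₘ E) A) (hconn : MConnected (E + A)) :
    ArcStrong 1 E (a ::ₘ A) ∨ ArcStrong 1 E (a.swap ::ₘ A) := by
  by_contra! hfail
  obtain ⟨X, hX, hXu, hX0, haX⟩ := h.exists_tight_of_not_arcStrong_cons hfail.1
  have hswap : ArcStrong 1 (a.swap ::ₘ E) A := fun Z hZ hZu => by
    rw [edgesCross_cons_swap]
    exact h Z hZ hZu
  obtain ⟨Y, hY, hYu, hY0, haY⟩ := hswap.exists_tight_of_not_arcStrong_cons hfail.2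
  rw [Prod.snd_swap, Prod.fst_swap] at haY
  have hsub : arcsOut A (X ∩ Y) + edgesCross E (X ∩ Y) +
      (arcsOut A (X ∪ Y) + edgesCross E (X ∪ Y)) = 0 := by
    have := arcsOut_inter_add_arcsOut_union_le A X Y
    have := edgesCross_inter_add_edgesCross_union_le E X Y
    omega
  have hI : X ∩ Y = ∅ := by
    by_contra hne
    have hXYu : X ∩ Y ≠ Finset.univ := fun hXY =>
      haX.2 (Finset.mem_of_mem_inter_left (hXY ▸ Finset.mem_univ a.1))
    have := h.one_le_of_not_crosses (Finset.nonempty_iff_ne_empty.2 hne) hXYu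
      (by simp only [Finset.mem_inter]; tauto)
    omega
  have hU : X ∪ Y = Finset.univ := by
    by_contra hne
    have := h.one_le_of_not_crosses (hX.mono Finset.subset_union_left) hne
      (by simp only [Finset.mem_union]; tauto)
    omega
  have hYc : Xᶜ = Y := (IsCompl.of_eq hI hU).compl_eq
  have hc := hconn X hX hXu
  have := arcsOut_add_arcsOut_compl A X
  rw [edgesCross_add, hYc] at *
  omega

end ArcStrong

lemma card_add_le_card_sub_bridgeCount {E E' F₁ F₂ : Multiset (V × V)}
    (hE : E = E' + F₁ + F₂.map Prod.swap) (h : ArcStrong 1 E' (F₁ + F₂)) :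
    Multiset.card (F₁ + F₂) ≤ Multiset.card E - bridgeCount E := by
  rw [add_assoc] at hE
  subst hE
  have hbridges := Multiset.card_le_card
    (h.filter_not_mConnected_erase_le (D := F₁ + F₂.map Prod.swap) (by simp))
  rw [← bridgeCount] at hbridges
  simp only [Multiset.card_add, Multiset.card_map] at hbridges ⊢
  omega

lemma exists_arcStrong_of_le {E : Multiset (V × V)} (hconn : MConnected E) {k : ℕ}
    (hk : k ≤ Multiset.card E - bridgeCount E) :
    ∃ E' F₁ F₂ : Multiset (V × V), E = E' + F₁ + F₂.map Prod.swap ∧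
      Multiset.card (F₁ + F₂) = k ∧ ArcStrong 1 E' (F₁ + F₂) := by
  induction k with
  | zero => exact ⟨E, 0, 0, by simp, rfl, fun X hX hXu => by simpa using hconn X hX hXu⟩
  | succ k ih =>
    obtain ⟨E', F₁, F₂, hE, rfl, h⟩ := ih (by omega)
    have hcard : Multiset.card E = Multiset.card E' + Multiset.card (F₁ + F₂) := by
      simp [hE, add_assoc]
    have hE'E : E' ≤ E := by
      rw [hE, add_assoc]
      exact Multiset.le_add_right _ _
    obtain ⟨a, haE', hnb⟩ := exists_mem_mConnected_erase hE'E (by omega)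
    obtain ⟨E'', rfl⟩ := Multiset.exists_cons_of_mem haE'
    have hconn' : MConnected (E'' + (F₁ + F₂)) := hnb.of_edgesCross_eq fun X => by
      simp [hE, Multiset.cons_add, add_assoc]
    rcases h.orient hconn' with h' | h'
    · exact ⟨E'', a ::ₘ F₁, F₂, by simp [hE, Multiset.cons_add, Multiset.add_cons], by simp,
        by rwa [Multiset.cons_add]⟩
    · exact ⟨E'', F₁, a.swap ::ₘ F₂, by simp [hE, Multiset.cons_add, Multiset.add_cons], by simp,
        by rwa [Multiset.add_cons]⟩

end Orientation

theorem stmt_2_general {V : Type*} [Fintype V] (E : Multiset (V × V)) (k : ℕ) :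
    (∃ E' F₁ F₂ : Multiset (V × V),
        E = E' + F₁ + F₂.map Prod.swap ∧
        Multiset.card (F₁ + F₂) = k ∧
        ArcStrong 1 E' (F₁ + F₂)) ↔
      MConnected E ∧ k ≤ Multiset.card E - bridgeCount E := by
  constructor
  · rintro ⟨E', F₁, F₂, hE, rfl, h⟩
    refine ⟨h.mConnected.of_edgesCross_eq fun X => ?_, card_add_le_card_sub_bridgeCount hE h⟩
    simp [hE, add_assoc]
  · exact fun ⟨hconn, hk⟩ => exists_arcStrong_of_le hconn hk

/-- Robbins-type theorem for partial orientations: `G = (V, E)` has a strongly connected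
partial orientation in which exactly `k` edges are oriented (an orientation of an edge is
its ordered version or the reverse) iff `G` is connected and `k ≤ |E| - b(G)`. -/
theorem stmt_2 {V : Type*} [Fintype V] [Nonempty V] (E : Multiset (V × V)) (k : ℕ) :
    (∃ E' F₁ F₂ : Multiset (V × V),
        E = E' + F₁ + F₂.map Prod.swap ∧
        Multiset.card (F₁ + F₂) = k ∧
        ArcStrong 1 E' (F₁ + F₂)) ↔
      MConnected E ∧ k ≤ Multiset.card E - bridgeCount E :=
  stmt_2_general E k
end

section
/- Every graph G obtained from a cubic 2-vertex-connected graph by subdividing every edge twice admits a legal path decomposition, i.e., a set of subpaths P = P1 ∪ P2 of G such that the edge sets of the paths partition E(G), every path in P_i has exactly i edges for i = 1, 2, and every vertex of G is contained in exactly two paths of P. -/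
/-!
Label the three neighbours of every vertex `u` of the cubic graph by `0, 1, 2`, and write
`w(u,v)` for the subdivision vertex of `uv` next to `u`. Take as 2-paths the cherries
`w(u,v₀) - u - w(u,v₁)`, and as 1-paths the spokes `u - w(u,v₂)` together with all middle edges
`w(u,v) - w(v,u)`. Every original vertex `u` lies on its cherry and its spoke only, and every
subdivision vertex `w(u,v)` lies on the middle edge of `uv` and on exactly one of the cherry and
the spoke at `u`, according to the label of `v`; the edge `u - w(u,v)` is covered by that same path.
-/

open scoped Classical

/-- The subdivision vertices of `G`: one vertex `w (u,v)` for each ordered adjacent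
pair, so each edge `{u,v}` gets the two internal vertices `w (u,v)` and `w (v,u)`. -/
abbrev SubVert {V0 : Type*} (G : SimpleGraph V0) := {p : V0 × V0 // G.Adj p.1 p.2}

/-- The adjacency relation of the graph obtained from `G` by subdividing every edge
twice: each edge `{u,v}` is replaced by the path `u - w(u,v) - w(v,u) - v`. -/
def subAdj {V0 : Type*} (G : SimpleGraph V0) :
    (V0 ⊕ SubVert G) → (V0 ⊕ SubVert G) → Prop
  | Sum.inl u, Sum.inr q => u = q.1.1
  | Sum.inr q, Sum.inl u => u = q.1.1
  | Sum.inr q, Sum.inr q' => q.1.1 = q'.1.2 ∧ q.1.2 = q'.1.1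
  | Sum.inl _, Sum.inl _ => False

/-- The graph obtained from `G` by subdividing every edge twice. -/
def subdivide {V0 : Type*} (G : SimpleGraph V0) : SimpleGraph (V0 ⊕ SubVert G) where
  Adj := subAdj G
  symm := ⟨by
    rintro (u | q) (w | q') h <;> simp only [subAdj] at h ⊢ <;> tauto⟩
  loopless := ⟨by
    rintro (u | q) h <;> simp only [subAdj] at h
    exact G.loopless.irrefl q.1.1 (h.2 ▸ q.2)⟩

/-- `G` is 2-vertex-connected: more than 2 vertices and deleting any vertex leaves a
connected graph. -/
def TwoVertexConnected {V0 : Type*} [Fintype V0] (G : SimpleGraph V0) : Prop :=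
  2 < Fintype.card V0 ∧ ∀ v : V0, (G.induce {u | u ≠ v}).Connected

/-- `(P1, P2)` is a legal path decomposition of `G`: `P1` consists of one-edge paths,
`P2` of two-edge paths, the edge sets of the paths partition `E(G)` (every edge lies on
exactly one path), and every vertex lies on exactly two paths. -/
def IsLegalDecomp {W : Type*} (G : SimpleGraph W)
    (P1 : Finset (W × W)) (P2 : Finset (W × W × W)) : Prop :=
  (∀ p ∈ P1, G.Adj p.1 p.2) ∧
  (∀ t ∈ P2, G.Adj t.1 t.2.1 ∧ G.Adj t.2.1 t.2.2 ∧ t.1 ≠ t.2.2) ∧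
  (∀ u v : W, G.Adj u v →
      (P1.filter fun p => s(p.1, p.2) = s(u, v)).card
        + (P2.filter fun t => s(t.1, t.2.1) = s(u, v) ∨ s(t.2.1, t.2.2) = s(u, v)).card
      = 1) ∧
  (∀ v : W, (P1.filter fun p => v = p.1 ∨ v = p.2).card
        + (P2.filter fun t => v = t.1 ∨ v = t.2.1 ∨ v = t.2.2).card = 2)

open Finset Function

theorem Finset.card_filter_image_of_injective {α β : Type*} [DecidableEq β] {f : α → β}
    (hf : Injective f) (s : Finset α) (p : β → Prop) [DecidablePred p] :
    ((s.image f).filter p).card = (s.filter fun x => p (f x)).card := by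
  rw [filter_image, card_image_of_injective _ hf]

theorem Finset.card_filter_univ_of_iff_eq_and {α : Type*} [Fintype α] {p : α → Prop}
    [DecidablePred p] (a : α) (P : Prop) [Decidable P] (h : ∀ x, p x ↔ x = a ∧ P) :
    (univ.filter p).card = if P then 1 else 0 := by
  by_cases hP : P
  · rw [if_pos hP, card_eq_one]
    exact ⟨a, by ext; simp [h, hP]⟩
  · rw [if_neg hP, card_eq_zero, filter_eq_empty_iff]
    simp [h, hP]

theorem Fin.ite_eq_two_add_ite_eq_zero_or_one (l : Fin 3) :
    ((if l = 2 then 1 else 0) + if l = 0 ∨ l = 1 then 1 else 0) = 1 := by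
  fin_cases l <;> rfl

namespace SubVert

variable {V : Type*} {G : SimpleGraph V}

def swap (q : SubVert G) : SubVert G := ⟨q.1.swap, q.2.symm⟩

@[simp] theorem swap_swap (q : SubVert G) : q.swap.swap = q := rfl

theorem swap_eq_iff_eq_swap {q r : SubVert G} : q.swap = r ↔ q = r.swap := by
  constructor <;> rintro rfl <;> rfl

variable (ℓ : ∀ u, G.neighborSet u ≃ Fin 3)

def label (q : SubVert G) : Fin 3 := ℓ q.1.1 ⟨q.1.2, q.2⟩

def ofLabel (u : V) (i : Fin 3) : SubVert G := ⟨(u, (ℓ u).symm i), ((ℓ u).symm i).2⟩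

@[simp] theorem label_ofLabel (u : V) (i : Fin 3) : label ℓ (ofLabel ℓ u i) = i :=
  (ℓ u).apply_symm_apply i

theorem eq_ofLabel_iff {q : SubVert G} {u : V} {i : Fin 3} :
    q = ofLabel ℓ u i ↔ u = q.1.1 ∧ label ℓ q = i := by
  obtain ⟨⟨x, y⟩, hxy⟩ := q
  simp only [ofLabel, label, Subtype.ext_iff, Prod.ext_iff]
  constructor
  · rintro ⟨rfl, rfl⟩; exact ⟨rfl, label_ofLabel ℓ x i⟩
  · rintro ⟨rfl, h⟩; rw [← h]; simp

theorem ofLabel_eq_iff {q : SubVert G} {u : V} {i : Fin 3} :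
    ofLabel ℓ u i = q ↔ u = q.1.1 ∧ label ℓ q = i := by
  rw [eq_comm, eq_ofLabel_iff]

end SubVert

namespace subdivide

open SubVert

variable {V : Type*} {G : SimpleGraph V}

theorem adj_cases {x y : V ⊕ SubVert G} (h : (subdivide G).Adj x y) :
    ∃ q : SubVert G, s(x, y) = s(.inl q.1.1, .inr q) ∨ s(x, y) = s(.inr q, .inr q.swap) := by
  change subAdj G x y at h
  rcases x with u | q <;> rcases y with v | q' <;> simp only [subAdj] at h
  · exact ⟨q', .inl (by rw [h])⟩
  · exact ⟨q, .inl (by rw [h, Sym2.eq_swap])⟩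
  · refine ⟨q, .inr ?_⟩
    obtain ⟨⟨a, b⟩, hab⟩ := q'
    obtain ⟨rfl, rfl⟩ := h
    rfl

theorem card_filter_lt_and_iff_eq_or_eq_swap [Fintype V] [LinearOrder V]
    {p : SubVert G → Prop} [DecidablePred p] (q : SubVert G)
    (hp : ∀ r, p r ↔ r = q ∨ r = q.swap) :
    (univ.filter fun r : SubVert G => r.1.1 < r.1.2 ∧ p r).card = 1 := by
  simp only [hp]
  rw [card_eq_one]
  rcases q.2.ne.lt_or_gt with h | h
  · refine ⟨q, ?_⟩
    ext r
    simp only [mem_filter, mem_univ, true_and, mem_singleton]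
    constructor
    · rintro ⟨hr, hq | hq⟩
      · exact hq
      · subst hq; exact (lt_asymm hr h).elim
    · rintro rfl; exact ⟨h, .inl rfl⟩
  · refine ⟨q.swap, ?_⟩
    ext r
    simp only [mem_filter, mem_univ, true_and, mem_singleton]
    constructor
    · rintro ⟨hr, hq | hq⟩
      · subst hq; exact (lt_asymm hr h).elim
      · exact hq
    · rintro rfl; exact ⟨h, .inr rfl⟩

variable (ℓ : ∀ u, G.neighborSet u ≃ Fin 3)

def spoke (u : V) : (V ⊕ SubVert G) × (V ⊕ SubVert G) := (.inl u, .inr (ofLabel ℓ u 2))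

def middle (q : SubVert G) : (V ⊕ SubVert G) × (V ⊕ SubVert G) := (.inr q, .inr q.swap)

def cherry (u : V) : (V ⊕ SubVert G) × (V ⊕ SubVert G) × (V ⊕ SubVert G) :=
  (.inr (ofLabel ℓ u 0), .inl u, .inr (ofLabel ℓ u 1))

variable [Fintype V]

noncomputable def paths2 : Finset ((V ⊕ SubVert G) × (V ⊕ SubVert G) × (V ⊕ SubVert G)) :=
  univ.image (cherry ℓ)

theorem card_filter_paths2 (p : (V ⊕ SubVert G) × (V ⊕ SubVert G) × (V ⊕ SubVert G) → Prop)
    [DecidablePred p] :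
    ((paths2 ℓ).filter p).card = (univ.filter fun u => p (cherry ℓ u)).card := by
  refine card_filter_image_of_injective (fun u v h => ?_) _ _
  simpa [cherry] using congrArg (fun t => t.2.1) h

variable [LinearOrder V]

/-- Each middle edge `w(u,v) w(v,u)` is listed once, oriented by the order on `V`. -/
noncomputable def paths1 : Finset ((V ⊕ SubVert G) × (V ⊕ SubVert G)) :=
  univ.image (spoke ℓ) ∪ (univ.filter fun q : SubVert G => q.1.1 < q.1.2).image middle

theorem card_filter_paths1 (p : (V ⊕ SubVert G) × (V ⊕ SubVert G) → Prop) [DecidablePred p] :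
    ((paths1 ℓ).filter p).card = (univ.filter fun u => p (spoke ℓ u)).card
      + (univ.filter fun q : SubVert G => q.1.1 < q.1.2 ∧ p (middle q)).card := by
  have hspoke : Injective (spoke ℓ) := fun u v h => by simpa [spoke] using congrArg Prod.fst h
  have hmiddle : Injective (middle (G := G)) := fun q r h => by
    simpa [middle] using congrArg Prod.fst h
  have hdisj : Disjoint (univ.image (spoke ℓ))
      ((univ.filter fun q : SubVert G => q.1.1 < q.1.2).image middle) := by
    simp [disjoint_left, spoke, middle]
  rw [paths1, filter_union, card_union_of_disjoint (disjoint_filter_filter hdisj),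
    card_filter_image_of_injective hspoke, card_filter_image_of_injective hmiddle, filter_filter]

theorem card_paths_through (v : V ⊕ SubVert G) :
    ((paths1 ℓ).filter fun p => v = p.1 ∨ v = p.2).card
      + ((paths2 ℓ).filter fun t => v = t.1 ∨ v = t.2.1 ∨ v = t.2.2).card = 2 := by
  rw [card_filter_paths1, card_filter_paths2]
  rcases v with u | q
  · rw [card_filter_univ_of_iff_eq_and u True (by simp [spoke, eq_comm]),
      card_filter_univ_of_iff_eq_and u True (by simp [cherry, eq_comm])]
    simp [middle]
  · rw [card_filter_univ_of_iff_eq_and q.1.1 (label ℓ q = 2) (by simp [spoke, eq_ofLabel_iff]),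
      card_filter_lt_and_iff_eq_or_eq_swap q
        (fun r => by rw [← swap_eq_iff_eq_swap]; simp [middle, eq_comm]),
      card_filter_univ_of_iff_eq_and q.1.1 (label ℓ q = 0 ∨ label ℓ q = 1)
        (by simp [cherry, eq_ofLabel_iff]; tauto),
      add_right_comm, Fin.ite_eq_two_add_ite_eq_zero_or_one]

theorem card_paths_along {x y : V ⊕ SubVert G} (h : (subdivide G).Adj x y) :
    ((paths1 ℓ).filter fun p => s(p.1, p.2) = s(x, y)).card
      + ((paths2 ℓ).filter fun t => s(t.1, t.2.1) = s(x, y) ∨ s(t.2.1, t.2.2) = s(x, y)).card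
      = 1 := by
  rw [card_filter_paths1, card_filter_paths2]
  obtain ⟨q, hq | hq⟩ := adj_cases h <;> rw [hq]
  · rw [card_filter_univ_of_iff_eq_and q.1.1 (label ℓ q = 2) (by simp [spoke, ofLabel_eq_iff]),
      card_filter_univ_of_iff_eq_and q.1.1 (label ℓ q = 0 ∨ label ℓ q = 1)
        (by simp [cherry, ofLabel_eq_iff]; tauto)]
    simp [middle, Fin.ite_eq_two_add_ite_eq_zero_or_one]
  · rw [card_filter_lt_and_iff_eq_or_eq_swap q (fun r => by simp [middle, swap_eq_iff_eq_swap])]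
    simp [spoke, cherry]

theorem isLegalDecomp_paths : IsLegalDecomp (subdivide G) (paths1 ℓ) (paths2 ℓ) := by
  refine ⟨?_, ?_, fun x y h => by convert card_paths_along ℓ h,
    fun v => by convert card_paths_through ℓ v⟩
  · simp only [paths1, mem_union, mem_image, mem_filter, mem_univ, true_and]
    rintro _ (⟨u, rfl⟩ | ⟨q, -, rfl⟩)
    exacts [rfl, ⟨rfl, rfl⟩]
  · simp only [paths2, mem_image, mem_univ, true_and]
    rintro _ ⟨u, rfl⟩
    refine ⟨rfl, rfl, fun h => ?_⟩
    simpa using congrArg (label ℓ) (Sum.inr_injective h)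

end subdivide

theorem stmt_5_general {V0 : Type*} [Fintype V0] (G0 : SimpleGraph V0)
    (hcubic : ∀ v : V0, G0.degree v = 3) :
    ∃ (P1 : Finset ((V0 ⊕ SubVert G0) × (V0 ⊕ SubVert G0)))
      (P2 : Finset ((V0 ⊕ SubVert G0) × (V0 ⊕ SubVert G0) × (V0 ⊕ SubVert G0))),
      IsLegalDecomp (subdivide G0) P1 P2 := by
  let _ : LinearOrder V0 := WellOrderingRel.isWellOrder.linearOrder
  exact ⟨_, _, subdivide.isLegalDecomp_paths fun u =>
    Fintype.equivFinOfCardEq ((G0.card_neighborSet_eq_degree u).trans (hcubic u))⟩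

/-- Every graph obtained from a cubic 2-vertex-connected graph by subdividing every
edge twice admits a legal path decomposition. -/
theorem stmt_5 {V0 : Type*} [Fintype V0] (G0 : SimpleGraph V0)
    (hcubic : ∀ v : V0, G0.degree v = 3) (h2c : TwoVertexConnected G0) :
    ∃ (P1 : Finset ((V0 ⊕ SubVert G0) × (V0 ⊕ SubVert G0)))
      (P2 : Finset ((V0 ⊕ SubVert G0) × (V0 ⊕ SubVert G0) × (V0 ⊕ SubVert G0))),
      IsLegalDecomp (subdivide G0) P1 P2 :=
  stmt_5_general G0 hcubic
end

section
/- For any 2-edge-connected graph G, define an equivalence relation ∼ on V(G) by u ∼ v if and only if the local edge-connectivity λ_G(u,v) is at least 3. Let Q_G be the quotient graph whose vertices are the equivalence classes of ∼, with an edge between classes B_u and B_v for every edge of G joining B_u and B_v. Then Q_G is a cactus, i.e., λ_{Q_G}(u,v) = 2 for all distinct vertices u, v of Q_G. -/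
open scoped Classical

/-- Local edge-connectivity between `u` and `v` in the multigraph `E`: the minimum
size of a cut separating `u` from `v` (by Menger, the maximum number of pairwise
edge-disjoint `u`-`v` paths). -/
noncomputable def lam {V : Type*} (E : Multiset (V × V)) (u v : V) : ℕ :=
  sInf {n | ∃ X : Finset V, u ∈ X ∧ v ∉ X ∧ edgesCross E X = n}

/-!
Two vertices in different classes have `λ_G(u,v) = 2`. Cuts of `Q_G` pull back to cuts of `G`
with the same number of crossing edges, so `λ_Q ≥ 2`. Conversely a minimum `u`-`v` cut `X` of `G`
has only two crossing edges, so no `a ∈ X`, `b ∉ X` can satisfy `λ_G(a,b) ≥ 3`: `X` is a union of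
classes and therefore is itself a cut of `Q_G`, giving `λ_Q ≤ 2`.
-/

section EdgeCuts

variable {V : Type*} (E : Multiset (V × V))

lemma lam_le_edgesCross {u v : V} {X : Finset V} (hu : u ∈ X) (hv : v ∉ X) :
    lam E u v ≤ edgesCross E X :=
  Nat.sInf_le ⟨X, hu, hv, rfl⟩

lemma exists_edgesCross_eq_lam {u v : V} (huv : u ≠ v) :
    ∃ X : Finset V, u ∈ X ∧ v ∉ X ∧ edgesCross E X = lam E u v :=
  Nat.sInf_mem (s := {n | ∃ X : Finset V, u ∈ X ∧ v ∉ X ∧ edgesCross E X = n})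
    ⟨_, {u}, Finset.mem_singleton_self u, by simpa using huv.symm, rfl⟩

lemma le_lam {u v : V} (huv : u ≠ v) {n : ℕ}
    (h : ∀ X : Finset V, u ∈ X → v ∉ X → n ≤ edgesCross E X) : n ≤ lam E u v := by
  obtain ⟨X, hu, hv, hX⟩ := exists_edgesCross_eq_lam E huv
  exact hX ▸ h X hu hv

lemma edgesCross_filter_of_not_separated (p : V × V → Prop) [DecidablePred p] {X : Finset V}
    (h : ∀ e ∈ E, ¬ p e → (e.1 ∈ X ↔ e.2 ∈ X)) :
    edgesCross (E.filter p) X = edgesCross E X := by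
  unfold edgesCross
  rw [Multiset.filter_filter]
  congr 1
  refine Multiset.filter_congr fun e he => ?_
  by_cases hp : p e
  · simp [hp]
  · have := h e he hp
    tauto

lemma edgesCross_map [Fintype V] {W : Type*} [DecidableEq W] (f : V → W) (X : Finset W) :
    edgesCross (E.map fun e => (f e.1, f e.2)) X
      = edgesCross E (Finset.univ.filter fun a => f a ∈ X) := by
  unfold edgesCross
  rw [Multiset.filter_map, Multiset.card_map]
  simp

end EdgeCuts

section QuotientGraph

variable {V : Type*} [Fintype V] (E : Multiset (V × V)) (s : Setoid V)

noncomputable abbrev quotientEdges : Multiset (Quotient s × Quotient s) :=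
  (E.filter fun e => ¬ s.r e.1 e.2).map fun e => (Quotient.mk s e.1, Quotient.mk s e.2)

lemma edgesCross_quotientEdges (X : Finset (Quotient s)) :
    edgesCross (quotientEdges E s) X
      = edgesCross E (Finset.univ.filter fun a => Quotient.mk s a ∈ X) := by
  rw [edgesCross_map]
  refine edgesCross_filter_of_not_separated E (fun e => ¬ s.r e.1 e.2) fun e _ he => ?_
  simp [Quotient.sound (not_not.mp he)]

lemma lam_le_lam_quotientEdges {u v : V} (huv : Quotient.mk s u ≠ Quotient.mk s v) :
    lam E u v ≤ lam (quotientEdges E s) (Quotient.mk s u) (Quotient.mk s v) :=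
  le_lam _ huv fun X hu hv => by
    rw [edgesCross_quotientEdges]
    exact lam_le_edgesCross E (by simpa using hu) (by simpa using hv)

lemma lam_quotientEdges_le_edgesCross {u v : V} {X : Finset V} (hu : u ∈ X) (hv : v ∉ X)
    (hX : ∀ a b, s.r a b → a ∈ X → b ∈ X) :
    lam (quotientEdges E s) (Quotient.mk s u) (Quotient.mk s v) ≤ edgesCross E X := by
  have hpre : (Finset.univ.filter fun a => Quotient.mk s a ∈ X.image (Quotient.mk s)) = X := by
    ext a
    simp only [Finset.mem_filter, Finset.mem_univ, true_and, Finset.mem_image]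
    exact ⟨fun ⟨b, hb, hba⟩ => hX b a (Quotient.exact hba) hb, fun ha => ⟨a, ha, rfl⟩⟩
  have hv' : Quotient.mk s v ∉ X.image (Quotient.mk s) := fun h =>
    hv (hpre ▸ by simpa using h)
  calc lam (quotientEdges E s) (Quotient.mk s u) (Quotient.mk s v)
      ≤ edgesCross (quotientEdges E s) (X.image (Quotient.mk s)) :=
        lam_le_edgesCross _ (Finset.mem_image_of_mem _ hu) hv'
    _ = edgesCross E X := by rw [edgesCross_quotientEdges, hpre]

end QuotientGraph

/-- For a 2-edge-connected graph `G`, the quotient graph `Q_G` by the equivalence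
relation `u ∼ v ↔ λ_G(u,v) ≥ 3` (with one edge for every edge of `G` joining two
distinct classes) is a cactus: all local edge-connectivities of `Q_G` equal 2. -/
theorem stmt_8 {V : Type*} [Fintype V] (E : Multiset (V × V))
    (h2ec : ∀ u v : V, u ≠ v → 2 ≤ lam E u v)
    (s : Setoid V) (hs : ∀ u v : V, s.r u v ↔ (u = v ∨ 3 ≤ lam E u v)) :
    ∀ qu qv : Quotient s, qu ≠ qv →
      lam ((E.filter fun e => ¬ s.r e.1 e.2).map
            fun e => (Quotient.mk s e.1, Quotient.mk s e.2)) qu qv = 2 := by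
  intro qu qv hne
  show lam (quotientEdges E s) qu qv = 2
  induction qu using Quotient.inductionOn with | h u => ?_
  induction qv using Quotient.inductionOn with | h v => ?_
  have huv : u ≠ v := fun h => hne (h ▸ rfl)
  have hlam : lam E u v = 2 := by
    have := h2ec u v huv
    have := (hs u v).not.mp fun h => hne (Quotient.sound h)
    omega
  obtain ⟨X, hu, hv, hX⟩ := exists_edgesCross_eq_lam E huv
  have hsat : ∀ a b, s.r a b → a ∈ X → b ∈ X := fun a b hab ha => by
    by_contra hb
    rcases (hs a b).mp hab with rfl | h
    · exact hb ha
    · have := lam_le_edgesCross E ha hb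
      omega
  have := lam_le_lam_quotientEdges E s hne
  have := lam_quotientEdges_le_edgesCross E s hu hv hsat
  omega
end

section
/- Let M be a mixed graph that is k-strong in a vertex subset S (i.e., for any two vertices s1, s2 ∈ S there are k internally vertex-disjoint paths from s1 to s2 in M), and let v ∈ V(M) − S. Suppose there are k paths P1, ..., Pk from v to vertices s1, ..., sk ∈ S pairwise intersecting only in v, and k paths P'1, ..., P'k from vertices s'1, ..., s'k ∈ S to v pairwise intersecting only in v. Then M is k-strong in S ∪ {v}. -/
/-!
Let `t ∈ S` and let `C` be a set of fewer than `k` vertices, avoiding `v` and `t`. One of the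
`k` paths from `v` into `S`, which meet only in `v`, avoids `C`; it ends at some `s ∈ S`, and one
of the `k` internally disjoint paths from `s` to `t` avoids `C` as well. So no such `C` separates
`v` from `t`, and Menger's theorem gives `k` internally disjoint paths from `v` to `t`; the paths
from `t` to `v` come from the paths `P'ᵢ` in the same way.

Menger's theorem is proved in Göring's form, by induction on the arcs, for disjoint paths between
vertex sets `A` and `B`. If deleting an arc `xy` leaves a separator `S` with `|S| < k`, then
`S + x` and `S + y` separate `A` from `B` in `G`, so both have exactly `k` vertices. In `G - xy`
there are `k` disjoint paths from `A` to `S + x` and `k` from `S + y` to `B`; since `S` separates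
`A` from `B` in `G - xy`, the two systems meet only in `S`, and they join up along `S` and `xy`.
The version for two vertices `a`, `b` is the one for the out-neighbours of `a` and the
in-neighbours of `b` in `G - a - b`.
-/

open scoped Classical

/-- One step in a mixed graph `(V, E, A)`: traverse an arc forward or an edge in
either direction. -/
def MStep {V : Type*} (E A : Multiset (V × V)) (x y : V) : Prop :=
  (x, y) ∈ A ∨ (x, y) ∈ E ∨ (y, x) ∈ E

/-- `p` is a path from `a` to `b` in the mixed graph `(V, E, A)`: a nonempty list of
pairwise distinct vertices, starting at `a`, ending at `b`, with consecutive vertices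
joined by an arc (forward) or an edge. -/
def IsMPath {V : Type*} (E A : Multiset (V × V)) (a b : V) (p : List V) : Prop :=
  p.Chain' (MStep E A) ∧ p.head? = some a ∧ p.getLast? = some b ∧ p.Nodup

/-- The mixed graph `(V, E, A)` is `k`-strong in the vertex set `S`: any two vertices
of `S` are joined by `k` paths that pairwise meet only in the endpoints. -/
def KStrongIn {V : Type*} (E A : Multiset (V × V)) (k : ℕ) (S : Set V) : Prop :=
  ∀ s₁ ∈ S, ∀ s₂ ∈ S, ∃ P : Fin k → List V,
    (∀ i, IsMPath E A s₁ s₂ (P i)) ∧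
    ∀ i j, i ≠ j → ∀ x, x ∈ P i → x ∈ P j → x = s₁ ∨ x = s₂

open Relation

namespace List

variable {α : Type*} {R : α → α → Prop} {l : List α} {a b u : α}

theorem IsChain.reflTransGen_of_head?_eq (h : l.IsChain R) (ha : l.head? = some a)
    (hu : u ∈ l) : ReflTransGen R a u := by
  obtain ⟨t, rfl⟩ := List.head?_eq_some_iff.mp ha
  exact h.induction (ReflTransGen R a) _ (fun _ _ hxy hx => hx.tail hxy) (fun _ => .refl) u hu

theorem IsChain.reflTransGen_of_getLast?_eq (h : l.IsChain R) (hb : l.getLast? = some b)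
    (hu : u ∈ l) : ReflTransGen R u b := by
  obtain ⟨t, rfl⟩ := List.getLast?_eq_some_iff.mp hb
  exact h.backwards_induction (ReflTransGen R · b) _ (fun _ _ hxy hy => hy.head hxy)
    (fun _ => by simpa using ReflTransGen.refl) u hu

end List

section Counting

variable {V : Type*} {k : ℕ} {P : Fin k → List V} {f : Fin k → V} {X : Finset V}

theorem exists_eq_of_pairwise_disjoint (hP : Pairwise fun i j => (P i).Disjoint (P j))
    (hf : ∀ i, f i ∈ P i) (hfX : ∀ i, f i ∈ X) (hX : X.card ≤ k) : ∀ z ∈ X, ∃ i, f i = z := by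
  have hinj : Set.InjOn f (Finset.univ : Finset (Fin k)) := fun i _ j _ hij => by
    by_contra hne
    exact hP hne (hf i) (hij ▸ hf j)
  intro z hz
  obtain ⟨i, -, hi⟩ := Finset.surjOn_of_injOn_of_card_le f (fun i _ => hfX i) hinj
    (by simpa using hX) hz
  exact ⟨i, hi⟩

theorem eq_of_mem_of_pairwise_disjoint (hP : Pairwise fun i j => (P i).Disjoint (P j))
    (hf : ∀ i, f i ∈ P i) (hfX : ∀ i, f i ∈ X) (hX : X.card ≤ k) {z : V} {i : Fin k}
    (hzX : z ∈ X) (hzP : z ∈ P i) : z = f i := by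
  obtain ⟨j, rfl⟩ := exists_eq_of_pairwise_disjoint hP hf hfX hX z hzX
  by_cases hij : i = j
  · rw [hij]
  · exact absurd (hf j) (hP hij hzP)

end Counting

namespace Digraph

variable {V : Type*} (G : Digraph V)

def IsPath (a b : V) (p : List V) : Prop :=
  p.IsChain G.Adj ∧ p.head? = some a ∧ p.getLast? = some b ∧ p.Nodup

def HasDisjointPathsBetween (k : ℕ) (A B : Set V) : Prop :=
  ∃ P : Fin k → List V, (∀ i, ∃ a ∈ A, ∃ b ∈ B, G.IsPath a b (P i)) ∧
    Pairwise fun i j => (P i).Disjoint (P j)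

def HasInternallyDisjointPaths (k : ℕ) (a b : V) : Prop :=
  ∃ P : Fin k → List V, (∀ i, G.IsPath a b (P i)) ∧
    ∀ i j, i ≠ j → ∀ x, x ∈ P i → x ∈ P j → x = a ∨ x = b

def deleteVerts (S : Set V) : Digraph V where
  Adj u w := G.Adj u w ∧ u ∉ S ∧ w ∉ S

def deleteArc (x y : V) : Digraph V where
  Adj u w := G.Adj u w ∧ ¬(u = x ∧ w = y)

-- `deleteVerts` keeps the vertices of `S` (as isolated vertices), hence the condition `a ∉ S`
def Separates (A B S : Set V) : Prop :=
  ∀ a ∈ A, a ∉ S → ∀ b ∈ B, ¬ ReflTransGen (G.deleteVerts S).Adj a b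

variable {G H : Digraph V} {a b c d u v w x y z t : V} {p q : List V}
  {A B S T X Y Z : Set V} {k : ℕ}

theorem IsPath.mono (hGH : G ≤ H) (h : G.IsPath a b p) : H.IsPath a b p :=
  ⟨h.1.imp hGH, h.2⟩

theorem HasDisjointPathsBetween.mono (hGH : G ≤ H)
    (h : G.HasDisjointPathsBetween k A B) : H.HasDisjointPathsBetween k A B :=
  let ⟨P, hP, hPd⟩ := h
  ⟨P, fun i => let ⟨a, ha, b, hb, hab⟩ := hP i; ⟨a, ha, b, hb, hab.mono hGH⟩, hPd⟩

theorem isPath_singleton (a : V) : G.IsPath a a [a] := by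
  simp [IsPath]

theorem mem_iff_of_reflTransGen_deleteVerts (h : ReflTransGen (G.deleteVerts S).Adj a b) :
    a ∈ S ↔ b ∈ S := by
  induction h with
  | refl => rfl
  | tail _ hbc ih => simp only [ih, hbc.2.1, hbc.2.2]

theorem deleteArc_le : G.deleteArc x y ≤ G := fun _ _ h => h.1

theorem deleteArc_lt (h : G.Adj x y) : G.deleteArc x y < G :=
  lt_of_le_of_ne deleteArc_le fun he => by
    have := congrArg (fun K : Digraph V => K.Adj x y) he
    simp only [deleteArc, and_true, not_true_eq_false, and_false] at this
    exact this ▸ h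

theorem Separates.mono (h : G.Separates A B S) (hST : S ⊆ T)
    (hle : H.deleteVerts T ≤ G.deleteVerts S) : H.Separates A B T :=
  fun a ha haT b hb hab =>
    h a ha (fun haS => haT (hST haS)) b hb (ReflTransGen.mono (fun _ _ h => hle h) _ _ hab)

theorem separates_insert_left (h : (G.deleteArc x y).Separates A B S) :
    G.Separates A B (insert x S) :=
  h.mono (Set.subset_insert _ _) fun _ _ ⟨huw, hu, hw⟩ =>
    ⟨⟨huw, fun hux => hu (Or.inl hux.1)⟩, fun h' => hu (Or.inr h'), fun h' => hw (Or.inr h')⟩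

theorem separates_insert_right (h : (G.deleteArc x y).Separates A B S) :
    G.Separates A B (insert y S) :=
  h.mono (Set.subset_insert _ _) fun _ _ ⟨huw, hu, hw⟩ =>
    ⟨⟨huw, fun hwy => hw (Or.inl hwy.2)⟩, fun h' => hu (Or.inr h'), fun h' => hw (Or.inr h')⟩

theorem Separates.of_deleteArc_left (hX : G.Separates A B X) (hx : x ∈ X)
    (hZ : (G.deleteArc x y).Separates A X Z) : G.Separates A B Z := by
  intro a ha haZ b hb hab
  have hout : ∀ w, ReflTransGen ((G.deleteArc x y).deleteVerts Z).Adj a w → w ∉ X :=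
    fun w hw hwX => hZ a ha haZ w hwX hw
  have key : ∀ w, ReflTransGen (G.deleteVerts Z).Adj a w →
      ReflTransGen ((G.deleteArc x y).deleteVerts Z).Adj a w ∧
        ReflTransGen (G.deleteVerts X).Adj a w := by
    intro w hw
    induction hw with
    | refl => exact ⟨.refl, .refl⟩
    | tail _ huw ih =>
      have hu := hout _ ih.1
      have hH : ((G.deleteArc x y).deleteVerts Z).Adj _ _ :=
        ⟨⟨huw.1, fun h => hu (h.1 ▸ hx)⟩, huw.2⟩
      exact ⟨ih.1.tail hH, ih.2.tail ⟨huw.1, hu, hout _ (ih.1.tail hH)⟩⟩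
  exact hX a ha (hout a .refl) b hb (key b hab).2

theorem Separates.of_deleteArc_right (hY : G.Separates A B Y) (hy : y ∈ Y)
    (hZ : (G.deleteArc x y).Separates Y B Z) : G.Separates A B Z := by
  intro a ha haZ b hb hab
  have hout : ∀ w, w ∉ Z → ReflTransGen ((G.deleteArc x y).deleteVerts Z).Adj w b → w ∉ Y :=
    fun w hwZ hw hwY => hZ w hwY hwZ b hb hw
  have key : ∀ w, ReflTransGen (G.deleteVerts Z).Adj w b →
      ReflTransGen ((G.deleteArc x y).deleteVerts Z).Adj w b ∧
        ReflTransGen (G.deleteVerts Y).Adj w b := by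
    intro w hw
    induction hw using ReflTransGen.head_induction_on with
    | refl => exact ⟨.refl, .refl⟩
    | head hwc _ ih =>
      have hc := hout _ hwc.2.2 ih.1
      have hH : ((G.deleteArc x y).deleteVerts Z).Adj _ _ :=
        ⟨⟨hwc.1, fun h => hc (h.2 ▸ hy)⟩, hwc.2⟩
      exact ⟨ih.1.head hH, ih.2.head ⟨hwc.1, hout _ hwc.2.1 (ih.1.head hH), hc⟩⟩
  exact hY a ha (hout a haZ (key a hab).1) b hb (key a hab).2

theorem exists_isPath_subset (h : p.IsChain (ReflGen G.Adj)) (ha : p.head? = some a)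
    (hb : p.getLast? = some b) : ∃ q, G.IsPath a b q ∧ q ⊆ p := by
  induction p generalizing a with
  | nil => simp at ha
  | cons c t ih =>
    obtain rfl : c = a := by simpa using ha
    cases t with
    | nil =>
      obtain rfl : c = b := by simpa using hb
      exact ⟨[c], isPath_singleton c, List.Subset.refl _⟩
    | cons d t =>
      obtain ⟨q, hq, hqt⟩ := ih h.tail rfl (by simpa using hb)
      by_cases hcq : c ∈ q
      · obtain ⟨s, r, rfl⟩ := List.mem_iff_append.mp hcq
        refine ⟨c :: r, ⟨hq.1.suffix (List.suffix_append _ _), rfl, ?_, ?_⟩, ?_⟩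
        · simpa using hq.2.2.1
        · exact hq.2.2.2.sublist (List.sublist_append_right _ _)
        · exact fun z hz => List.mem_cons_of_mem _ (hqt (List.subset_append_right _ _ hz))
      · have hcd : G.Adj c d := by
          rcases List.isChain_cons_cons.mp h |>.1 with _ | hcd
          · exact absurd (List.mem_of_head? hq.2.1) hcq
          · exact hcd
        obtain ⟨q', rfl⟩ := List.head?_eq_some_iff.mp hq.2.1
        refine ⟨c :: d :: q', ⟨List.IsChain.cons_cons hcd hq.1, rfl, ?_, ?_⟩, ?_⟩
        · simpa using hq.2.2.1
        · exact List.nodup_cons.mpr ⟨hcq, hq.2.2.2⟩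
        · exact List.cons_subset_cons _ hqt

theorem isChain_deleteVerts (h : p.IsChain G.Adj) (hp : ∀ v ∈ p, v ∉ S) :
    p.IsChain (G.deleteVerts S).Adj :=
  h.imp_of_mem_imp fun _ _ hu hw huw => ⟨huw, hp _ hu, hp _ hw⟩

theorem IsPath.reflTransGen_deleteVerts_of_mem_left (hp : G.IsPath a z p)
    (hpS : ∀ v ∈ p, v ∈ S → v = z) (hu : u ∈ p) (huS : u ∉ S) :
    ReflTransGen (G.deleteVerts S).Adj a u := by
  obtain ⟨p', rfl⟩ := List.getLast?_eq_some_iff.mp hp.2.2.1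
  have hzp' : z ∉ p' := fun hz => (List.nodup_append.mp hp.2.2.2).2.2 z hz z (by simp) rfl
  have hp'S : ∀ v ∈ p', v ∉ S := fun v hv hvS =>
    hzp' (hpS v (List.mem_append_left _ hv) hvS ▸ hv)
  by_cases hzS : z ∈ S
  · have hup' : u ∈ p' := by
      rcases List.mem_append.mp hu with hu | hu
      · exact hu
      · exact absurd (List.mem_singleton.mp hu ▸ hzS) huS
    have hne : p' ≠ [] := List.ne_nil_of_mem hup'
    refine (isChain_deleteVerts (hp.1.prefix (List.prefix_append _ _)) hp'S)
      |>.reflTransGen_of_head?_eq ?_ hup'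
    simpa [List.head?_append, List.head?_eq_some_head hne] using hp.2.1
  · refine (isChain_deleteVerts hp.1 fun v hv => ?_).reflTransGen_of_head?_eq hp.2.1 hu
    rcases List.mem_append.mp hv with hv | hv
    · exact hp'S v hv
    · exact List.mem_singleton.mp hv ▸ hzS

theorem IsPath.reflTransGen_deleteVerts_of_mem_right (hq : G.IsPath z b q)
    (hqS : ∀ v ∈ q, v ∈ S → v = z) (hu : u ∈ q) (huS : u ∉ S) :
    ReflTransGen (G.deleteVerts S).Adj u b := by
  obtain ⟨q', rfl⟩ := List.head?_eq_some_iff.mp hq.2.1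
  have hzq' : z ∉ q' := (List.nodup_cons.mp hq.2.2.2).1
  have hq'S : ∀ v ∈ q', v ∉ S := fun v hv hvS =>
    hzq' (hqS v (List.mem_cons_of_mem _ hv) hvS ▸ hv)
  by_cases hzS : z ∈ S
  · have huq' : u ∈ q' := by
      rcases List.mem_cons.mp hu with hu | hu
      · exact absurd (hu ▸ hzS) huS
      · exact hu
    refine (isChain_deleteVerts hq.1.tail hq'S).reflTransGen_of_getLast?_eq ?_ huq'
    simpa [List.getLast?_cons, List.getLast?_eq_some_getLast (List.ne_nil_of_mem huq')]
      using hq.2.2.1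
  · refine (isChain_deleteVerts hq.1 fun v hv => ?_).reflTransGen_of_getLast?_eq hq.2.2.1 hu
    rcases List.mem_cons.mp hv with hv | hv
    · exact hv ▸ hzS
    · exact hq'S v hv

theorem Separates.mem_of_mem_of_mem (hS : G.Separates A B S) (ha : a ∈ A) (hp : G.IsPath a z p)
    (hpS : ∀ v ∈ p, v ∈ S → v = z) (hb : b ∈ B) (hq : G.IsPath w b q)
    (hqS : ∀ v ∈ q, v ∈ S → v = w) (hup : u ∈ p) (huq : u ∈ q) : u ∈ S := by
  by_contra huS
  have hau := hp.reflTransGen_deleteVerts_of_mem_left hpS hup huS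
  exact hS a ha ((mem_iff_of_reflTransGen_deleteVerts hau).not.mpr huS) b hb
    (hau.trans (hq.reflTransGen_deleteVerts_of_mem_right hqS huq huS))

theorem IsPath.isChain_reflGen_append (hp : G.IsPath a z p) (hq : G.IsPath w b q) (hGH : G ≤ H)
    (hzw : ReflGen H.Adj z w) : (p ++ q).IsChain (ReflGen H.Adj) :=
  (hp.1.imp fun _ _ h => ReflGen.single (hGH h)).append
    (hq.1.imp fun _ _ h => ReflGen.single (hGH h)) (by simpa [hp.2.2.1, hq.2.1] using hzw)

theorem hasDisjointPathsBetween_of_walks {W : Fin k → List V}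
    (hW : ∀ i, (W i).IsChain (ReflGen G.Adj)) (hA : ∀ i, ∃ a ∈ A, (W i).head? = some a)
    (hB : ∀ i, ∃ b ∈ B, (W i).getLast? = some b) (hWd : Pairwise fun i j => (W i).Disjoint (W j)) :
    G.HasDisjointPathsBetween k A B := by
  choose a ha hWa using hA
  choose b hb hWb using hB
  choose R hR hRW using fun i => exists_isPath_subset (hW i) (hWa i) (hWb i)
  exact ⟨R, fun i => ⟨a i, ha i, b i, hb i, hR i⟩,
    fun i j hij u hu hu' => hWd hij (hRW i hu) (hRW j hu')⟩

theorem HasDisjointPathsBetween.of_deleteArc {S : Finset V} (hxy : G.Adj x y)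
    (hS : (G.deleteArc x y).Separates A B S) (hSk : S.card < k) (hxS : x ∉ S) (hyS : y ∉ S)
    (hP : (G.deleteArc x y).HasDisjointPathsBetween k A ↑(insert x S))
    (hQ : (G.deleteArc x y).HasDisjointPathsBetween k ↑(insert y S) B) :
    G.HasDisjointPathsBetween k A B := by
  obtain ⟨P, hP, hPd⟩ := hP
  obtain ⟨Q, hQ, hQd⟩ := hQ
  choose a ha z hz hPz using hP
  choose w hw b hb hQw using hQ
  have hzP : ∀ i, z i ∈ P i := fun i => List.mem_of_getLast? (hPz i).2.2.1
  have hwQ : ∀ j, w j ∈ Q j := fun j => List.mem_of_head? (hQw j).2.1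
  have hXk : (insert x S).card ≤ k := (Finset.card_insert_le _ _).trans hSk
  have hYk : (insert y S).card ≤ k := (Finset.card_insert_le _ _).trans hSk
  have hPS : ∀ i, ∀ v ∈ P i, v ∈ (S : Set V) → v = z i := fun i v hv hvS =>
    eq_of_mem_of_pairwise_disjoint hPd hzP hz hXk (Finset.mem_insert_of_mem hvS) hv
  have hQS : ∀ j, ∀ v ∈ Q j, v ∈ (S : Set V) → v = w j := fun j v hv hvS =>
    eq_of_mem_of_pairwise_disjoint hQd hwQ hw hYk (Finset.mem_insert_of_mem hvS) hv
  have hswap : ∀ v ∈ S, Equiv.swap x y v = v := fun v hv =>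
    Equiv.swap_apply_of_ne_of_ne (fun h => hxS (h ▸ hv)) (fun h => hyS (h ▸ hv))
  -- `swap x y` matches the last vertices of the `P i` with the first vertices of the `Q j`
  have hm : ∀ i, Equiv.swap x y (z i) ∈ insert y S := fun i => by
    rcases Finset.mem_insert.mp (hz i) with h | h
    · simp [h]
    · simp [hswap _ h, h]
  choose j hj using fun i => exists_eq_of_pairwise_disjoint hQd hwQ hw hYk _ (hm i)
  have hzinj : Function.Injective z := fun i i' h => by
    by_contra hne
    exact hPd hne (hzP i) (h ▸ hzP i')
  have hjinj : Function.Injective j := fun i i' h =>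
    hzinj ((Equiv.swap x y).injective ((hj i).symm.trans (h ▸ hj i')))
  have hcross : ∀ i i' u, u ∈ P i → u ∈ Q (j i') → i = i' := by
    intro i i' u hu hu'
    -- `S` separates `A` from `B` in `G - xy`, so the two path systems only meet in `S`
    have huS := hS.mem_of_mem_of_mem (ha i) (hPz i) (hPS i) (hb _) (hQw _) (hQS _) hu hu'
    refine hzinj ((Equiv.swap x y).injective ?_)
    rw [← hj i', ← hQS _ u hu' huS, ← hPS i u hu huS, hswap u huS]
  refine hasDisjointPathsBetween_of_walks (W := fun i => P i ++ Q (j i)) (fun i => ?_)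
    (fun i => ⟨a i, ha i, by simp [(hPz i).2.1]⟩)
    (fun i => ⟨b (j i), hb _, by simp [(hQw (j i)).2.2.1]⟩) (fun i i' hii' u hu hu' => ?_)
  · refine (hPz i).isChain_reflGen_append (hQw _) deleteArc_le ?_
    rw [hj]
    rcases Finset.mem_insert.mp (hz i) with h | h
    · simpa [h] using ReflGen.single hxy
    · simpa [hswap _ h] using ReflGen.refl
  rcases List.mem_append.mp hu with h1 | h1 <;> rcases List.mem_append.mp hu' with h2 | h2
  · exact hPd hii' h1 h2
  · exact hii' (hcross i i' u h1 h2)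
  · exact hii' (hcross i' i u h2 h1).symm
  · exact hQd (hjinj.ne hii') h1 h2

theorem hasDisjointPathsBetween_of_forall_not_adj [Finite V] (hG : ∀ x y, ¬ G.Adj x y)
    (h : ∀ S : Finset V, G.Separates A B S → k ≤ S.card) : G.HasDisjointPathsBetween k A B := by
  let T := (Set.toFinite (A ∩ B)).toFinset
  have hT : G.Separates A B T := by
    intro a ha haT b hb hab
    rcases hab.cases_head with rfl | ⟨c, hac, -⟩
    · exact haT (by simp [T, ha, hb])
    · exact hG _ _ hac.1
  have := Fintype.ofFinite V
  obtain ⟨f⟩ := Function.Embedding.nonempty_of_card_le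
    (by simpa using h _ hT : Fintype.card (Fin k) ≤ Fintype.card T)
  refine ⟨fun i => [(f i : V)], fun i => ?_, fun i i' hii' => ?_⟩
  · have hfi := (f i).2
    simp only [T, Set.Finite.mem_toFinset] at hfi
    exact ⟨f i, hfi.1, f i, hfi.2, isPath_singleton _⟩
  · simpa using fun h => hii' (f.injective (Subtype.ext h)).symm

theorem hasDisjointPathsBetween_of_separates [Finite V] (G : Digraph V) (A B : Set V) (k : ℕ)
    (h : ∀ S : Finset V, G.Separates A B S → k ≤ S.card) : G.HasDisjointPathsBetween k A B := by
  have := Fintype.ofFinite V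
  induction G using WellFoundedLT.induction generalizing A B with
  | _ G ih =>
  by_cases hG : ∀ x y, ¬ G.Adj x y
  · exact hasDisjointPathsBetween_of_forall_not_adj hG h
  push Not at hG
  obtain ⟨x, y, hxy⟩ := hG
  have hlt := deleteArc_lt hxy
  by_cases hH : ∀ S : Finset V, (G.deleteArc x y).Separates A B S → k ≤ S.card
  · exact (ih _ hlt A B hH).mono deleteArc_le
  push Not at hH
  obtain ⟨S, hS, hSk⟩ := hH
  have hX : G.Separates A B ↑(insert x S) := by simpa using separates_insert_left hS
  have hY : G.Separates A B ↑(insert y S) := by simpa using separates_insert_right hS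
  have hxS : x ∉ S := fun hx => (h _ hX).not_gt (by rwa [Finset.insert_eq_of_mem hx])
  have hyS : y ∉ S := fun hy => (h _ hY).not_gt (by rwa [Finset.insert_eq_of_mem hy])
  exact .of_deleteArc hxy hS hSk hxS hyS
    (ih _ hlt A _ fun Z hZ => h Z (hX.of_deleteArc_left (by simp) hZ))
    (ih _ hlt _ B fun Z hZ => h Z (hY.of_deleteArc_right (by simp) hZ))

theorem Separates.singleton_of_neighbors (hab : a ≠ b) (hadj : ¬ G.Adj a b) {Z : Set V}
    (hZ : (G.deleteVerts {a, b}).Separates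
      ({w | G.Adj a w} \ {a, b}) ({w | G.Adj w b} \ {a, b}) Z) :
    G.Separates {a} {b} (Z \ {a, b}) := by
  intro a' ha' _ b' hb' hab'
  rw [Set.mem_singleton_iff] at ha' hb'
  subst a' b'
  -- after its last visit to `a`, a walk from `a` to `b` avoiding `Z \ {a, b}` runs in
  -- `G - a - b - Z` from an out-neighbour of `a`, and it can never step to `b`
  let T : Set V := {w | ∃ c ∈ {w | G.Adj a w} \ {a, b}, c ∉ Z ∧
    ReflTransGen ((G.deleteVerts {a, b}).deleteVerts Z).Adj c w}
  have hT : ∀ w ∈ T, w ∉ ({a, b} : Set V) := fun w ⟨c, hc, _, hcw⟩ =>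
    (mem_iff_of_reflTransGen_deleteVerts (ReflTransGen.mono (fun _ _ h => h.1) _ _ hcw)).not.mp
      hc.2
  have key : ∀ w, ReflTransGen (G.deleteVerts (Z \ {a, b})).Adj a w → w = a ∨ w ∈ T := by
    intro w hw
    induction hw with
    | refl => exact Or.inl rfl
    | @tail u w _ huw ih =>
      by_cases hw : w ∈ ({a, b} : Set V)
      · rcases hw with rfl | rfl
        · exact Or.inl rfl
        rcases ih with rfl | ⟨c, hc, hcZ, hcu⟩
        · exact absurd huw.1 hadj
        · exact absurd hcu (hZ c hc hcZ u ⟨huw.1, hT u ⟨c, hc, hcZ, hcu⟩⟩)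
      have hwZ : w ∉ Z := fun h => huw.2.2 ⟨h, hw⟩
      rcases ih with rfl | ⟨c, hc, hcZ, hcu⟩
      · exact Or.inr ⟨w, ⟨huw.1, hw⟩, hwZ, .refl⟩
      · have hu := hT u ⟨c, hc, hcZ, hcu⟩
        have huZ := (mem_iff_of_reflTransGen_deleteVerts hcu).not.mp hcZ
        exact Or.inr ⟨c, hc, hcZ, hcu.tail ⟨⟨huw.1, hu, hw⟩, huZ, hwZ⟩⟩
  rcases key _ hab' with h | h
  · exact hab h.symm
  · exact hT _ h (Or.inr rfl)

theorem IsPath.cons_append_of_deleteVerts (hp : (G.deleteVerts {a, b}).IsPath c d p)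
    (hac : G.Adj a c) (hdb : G.Adj d b) (hc : c ∉ ({a, b} : Set V)) (hab : a ≠ b) :
    G.IsPath a b (a :: p ++ [b]) := by
  have hpab : ∀ v ∈ p, v ∉ ({a, b} : Set V) := fun v hv =>
    (mem_iff_of_reflTransGen_deleteVerts (hp.1.reflTransGen_of_head?_eq hp.2.1 hv)).not.mp hc
  obtain ⟨p', rfl⟩ := List.head?_eq_some_iff.mp hp.2.1
  refine ⟨?_, rfl, List.getLast?_eq_some_iff.mpr ⟨a :: c :: p', rfl⟩, ?_⟩
  · refine List.IsChain.cons_cons hac (List.IsChain.append (hp.1.imp fun _ _ h => h.1)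
      (.singleton b) ?_)
    simpa [hp.2.2.1] using hdb
  · refine List.nodup_cons.mpr ⟨?_, List.nodup_append.mpr ⟨hp.2.2.2, by simp, ?_⟩⟩
    · simpa [hab] using fun h => hpab a h (Or.inl rfl)
    · simpa using fun v hv hvb => hpab v hv (Or.inr hvb)

theorem hasInternallyDisjointPaths_of_separates [Finite V] (hab : a ≠ b)
    (h : ∀ C : Finset V, a ∉ C → b ∉ C → G.Separates {a} {b} C → k ≤ C.card) :
    G.HasInternallyDisjointPaths k a b := by
  by_cases hadj : G.Adj a b
  · refine ⟨fun _ => [a, b], fun _ => ⟨List.isChain_pair.mpr hadj, rfl, rfl, by simp [hab]⟩, ?_⟩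
    intro _ _ _ x hx _
    simpa using hx
  obtain ⟨Q, hQ, hQd⟩ := (G.deleteVerts {a, b}).hasDisjointPathsBetween_of_separates
    ({w | G.Adj a w} \ {a, b}) ({w | G.Adj w b} \ {a, b}) k fun Z hZ => by
      classical
      refine (h (Z \ {a, b}) (by simp) (by simp) ?_).trans (Finset.card_le_card Finset.sdiff_subset)
      simpa using hZ.singleton_of_neighbors hab hadj
  choose c hc d hd hQcd using hQ
  refine ⟨fun i => a :: Q i ++ [b],
    fun i => (hQcd i).cons_append_of_deleteVerts (hc i).1 (hd i).1 (hc i).2 hab, ?_⟩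
  intro i j hij u hu hu'
  simp only [List.mem_cons, List.mem_append, List.not_mem_nil, or_false, or_assoc] at hu hu'
  rcases hu with rfl | hu | rfl
  · exact Or.inl rfl
  · rcases hu' with rfl | hu' | rfl
    · exact Or.inl rfl
    · exact absurd hu' (hQd hij hu)
    · exact Or.inr rfl
  · exact Or.inr rfl

theorem hasInternallyDisjointPaths_self (G : Digraph V) (k : ℕ) (a : V) :
    G.HasInternallyDisjointPaths k a a :=
  ⟨fun _ => [a], fun _ => isPath_singleton a, fun _ _ _ _ hx _ => Or.inl (List.mem_singleton.mp hx)⟩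

theorem exists_reflTransGen_deleteVerts_of_card_lt {C : Finset V} (hC : C.card < k)
    {P : Fin k → List V} {a b : Fin k → V} (hP : ∀ i, G.IsPath (a i) (b i) (P i))
    (hPC : ∀ i j, i ≠ j → ∀ x ∈ P i, x ∈ P j → x ∉ C) :
    ∃ i, ReflTransGen (G.deleteVerts C).Adj (a i) (b i) := by
  by_contra! hno
  have hmeet : ∀ i, ∃ x ∈ P i, x ∈ C := fun i => by
    by_contra! hi
    exact hno i <| (isChain_deleteVerts (hP i).1 hi).reflTransGen_of_head?_eq (hP i).2.1
      (List.mem_of_getLast? (hP i).2.2.1)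
  choose f hfP hfC using hmeet
  have hinj : Set.InjOn f (Finset.univ : Finset (Fin k)) := fun i _ j _ hij => by
    by_contra hne
    exact hPC i j hne _ (hfP i) (hij ▸ hfP j) (hfC i)
  have := Finset.card_le_card_of_injOn f (fun i _ => hfC i) hinj
  simp only [Finset.card_univ, Fintype.card_fin] at this
  omega

theorem hasInternallyDisjointPaths_of_fan_from [Finite V]
    (hS : ∀ s₁ ∈ S, ∀ s₂ ∈ S, G.HasInternallyDisjointPaths k s₁ s₂) (hv : v ∉ S)
    {s : Fin k → V} (hs : ∀ i, s i ∈ S) {P : Fin k → List V} (hP : ∀ i, G.IsPath v (s i) (P i))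
    (hPd : ∀ i j, i ≠ j → ∀ x, x ∈ P i → x ∈ P j → x = v) (ht : t ∈ S) :
    G.HasInternallyDisjointPaths k v t := by
  refine hasInternallyDisjointPaths_of_separates (fun h => hv (h ▸ ht)) fun C hvC htC hC => ?_
  by_contra! hCk
  obtain ⟨i, hi⟩ := exists_reflTransGen_deleteVerts_of_card_lt hCk (a := fun _ => v) hP
    fun i j hij x hx hx' hxC => hvC (hPd i j hij x hx hx' ▸ hxC)
  have hsC : s i ∉ C := (mem_iff_of_reflTransGen_deleteVerts hi).not.mp hvC
  obtain ⟨Q, hQ, hQd⟩ := hS (s i) (hs i) t ht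
  obtain ⟨j, hj⟩ := exists_reflTransGen_deleteVerts_of_card_lt hCk hQ
    fun i j hij x hx hx' hxC => (hQd i j hij x hx hx').elim (fun h => hsC (h ▸ hxC))
      (fun h => htC (h ▸ hxC))
  exact hC v rfl hvC t rfl (hi.trans hj)

theorem hasInternallyDisjointPaths_of_fan_to [Finite V]
    (hS : ∀ s₁ ∈ S, ∀ s₂ ∈ S, G.HasInternallyDisjointPaths k s₁ s₂) (hv : v ∉ S)
    {s : Fin k → V} (hs : ∀ i, s i ∈ S) {P : Fin k → List V} (hP : ∀ i, G.IsPath (s i) v (P i))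
    (hPd : ∀ i j, i ≠ j → ∀ x, x ∈ P i → x ∈ P j → x = v) (ht : t ∈ S) :
    G.HasInternallyDisjointPaths k t v := by
  refine hasInternallyDisjointPaths_of_separates (fun h => hv (h ▸ ht)) fun C htC hvC hC => ?_
  by_contra! hCk
  obtain ⟨i, hi⟩ := exists_reflTransGen_deleteVerts_of_card_lt hCk (b := fun _ => v) hP
    fun i j hij x hx hx' hxC => hvC (hPd i j hij x hx hx' ▸ hxC)
  have hsC : s i ∉ C := (mem_iff_of_reflTransGen_deleteVerts hi).not.mpr hvC
  obtain ⟨Q, hQ, hQd⟩ := hS t ht (s i) (hs i)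
  obtain ⟨j, hj⟩ := exists_reflTransGen_deleteVerts_of_card_lt hCk hQ
    fun i j hij x hx hx' hxC => (hQd i j hij x hx hx').elim (fun h => htC (h ▸ hxC))
      (fun h => hsC (h ▸ hxC))
  exact hC t rfl htC v rfl (hj.trans hi)

end Digraph

def mixedDigraph {V : Type*} (E A : Multiset (V × V)) : Digraph V where
  Adj := MStep E A

/-- If a mixed graph `M` is `k`-strong in `S`, `v ∉ S`, and there are `k` paths from
`v` to vertices of `S` meeting pairwise only in `v` as well as `k` paths from vertices
of `S` to `v` meeting pairwise only in `v`, then `M` is `k`-strong in `S ∪ {v}`. -/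
theorem stmt_13 {V : Type*} [Fintype V] (E A : Multiset (V × V)) (k : ℕ)
    (S : Set V) (v : V) (hv : v ∉ S)
    (hS : KStrongIn E A k S)
    (s s' : Fin k → V) (hs : ∀ i, s i ∈ S) (hs' : ∀ i, s' i ∈ S)
    (P P' : Fin k → List V)
    (hP : ∀ i, IsMPath E A v (s i) (P i))
    (hPdisj : ∀ i j, i ≠ j → ∀ x, x ∈ P i → x ∈ P j → x = v)
    (hP' : ∀ i, IsMPath E A (s' i) v (P' i))
    (hP'disj : ∀ i j, i ≠ j → ∀ x, x ∈ P' i → x ∈ P' j → x = v) :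
    KStrongIn E A k (S ∪ {v}) := by
  have hM : ∀ s₁ ∈ S, ∀ s₂ ∈ S, (mixedDigraph E A).HasInternallyDisjointPaths k s₁ s₂ := hS
  intro s₁ hs₁ s₂ hs₂
  change (mixedDigraph E A).HasInternallyDisjointPaths k s₁ s₂
  rcases hs₁ with h₁ | rfl <;> rcases hs₂ with h₂ | rfl
  · exact hM s₁ h₁ s₂ h₂
  · exact Digraph.hasInternallyDisjointPaths_of_fan_to hM hv hs' hP' hP'disj h₁
  · exact Digraph.hasInternallyDisjointPaths_of_fan_from hM hv hs hP hPdisj h₂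
  · exact Digraph.hasInternallyDisjointPaths_self _ _ _
end
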